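/- Let S be a semilattice of rectangular groups, i.e., a completely regular semigroup in which every D-class is a rectangular group (D being Green's relation, a semilattice congruence). Then D ∩ F = D ∩ Θ, where a F b iff ab⁻¹ ∈ E(S) and a Θ b iff a⁰b = ab⁰. -/
import Mathlib


/-- A completely regular semigroup: a semigroup with a unary inversion such that
every element lies in a subgroup; `a⁻¹` is the group inverse of `a` in its maximal
subgroup and `a * a⁻¹` is the identity of that subgroup. -/
class CompletelyRegularSemigroup (S : Type*) extends Semigroup S, Inv S where
  mul_inv_mul (a : S) : a * a⁻¹ * a = a
  inv_mul_inv (a : S) : a⁻¹ * a * a⁻¹ = a⁻¹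
  mul_inv_comm (a : S) : a * a⁻¹ = a⁻¹ * a

variable {S : Type*} [CompletelyRegularSemigroup S]

/-- Green's relation `H` on a completely regular semigroup: `a H b` iff
`a` and `b` lie in the same maximal subgroup, i.e. `a⁰ = b⁰`. -/
def hRel (a b : S) : Prop := a * a⁻¹ = b * b⁻¹

/-- The relation `Θ`: `a Θ b` iff `a⁰ * b = a * b⁰`. -/
def thetaRel (a b : S) : Prop := (a * a⁻¹) * b = a * (b * b⁻¹)

/-- The relation `F`: `a F b` iff `a * b⁻¹` is idempotent. -/
def fRel (a b : S) : Prop := IsIdempotentElem (a * b⁻¹)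

/-- The kernel of a congruence: the union of the congruence classes of idempotents. -/
def conKer (c : Con S) : Set S := {a | ∃ e : S, IsIdempotentElem e ∧ c a e}

/-- Green's relation `L` on a completely regular semigroup: equality of principal
left ideals (note `a ∈ Sa` in a completely regular semigroup). -/
def lRel (a b : S) : Prop := Set.range (fun x : S => x * a) = Set.range (fun x : S => x * b)

/-- Green's relation `R` on a completely regular semigroup. -/
def rRel (a b : S) : Prop := Set.range (fun x : S => a * x) = Set.range (fun x : S => b * x)

/-- Green's relation `D = L ∘ R`. -/
def dRel (a b : S) : Prop := ∃ c : S, lRel a c ∧ rRel c b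

/-! ### Auxiliary lemmas -/

private lemma mim (a : S) : a * a⁻¹ * a = a := CompletelyRegularSemigroup.mul_inv_mul a
private lemma imi (a : S) : a⁻¹ * a * a⁻¹ = a⁻¹ := CompletelyRegularSemigroup.inv_mul_inv a
private lemma comm0 (a : S) : a * a⁻¹ = a⁻¹ * a := CompletelyRegularSemigroup.mul_inv_comm a

private lemma absr (a : S) : a * (a * a⁻¹) = a := by
  rw [comm0, ← mul_assoc]; exact mim a

private lemma idem0 (a : S) : IsIdempotentElem (a * a⁻¹) := by
  show a * a⁻¹ * (a * a⁻¹) = a * a⁻¹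
  rw [← mul_assoc, mim]

private lemma fbi (b : S) : (b * b⁻¹) * b⁻¹ = b⁻¹ := by
  rw [comm0]; exact imi b

private lemma bif' (b : S) : b⁻¹ * (b * b⁻¹) = b⁻¹ := by
  rw [← mul_assoc]; exact imi b

private lemma lRel_iff {a b : S} :
    lRel a b ↔ (∃ x, x * b = a) ∧ (∃ y, y * a = b) := by
  constructor
  · intro h
    have ha : a ∈ Set.range (fun x : S => x * b) := by
      rw [← h]; exact ⟨a * a⁻¹, mim a⟩
    have hb : b ∈ Set.range (fun x : S => x * a) := by
      rw [h]; exact ⟨b * b⁻¹, mim b⟩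
    exact ⟨ha, hb⟩
  · rintro ⟨⟨x, hx⟩, ⟨y, hy⟩⟩
    apply Set.eq_of_subset_of_subset
    · rintro z ⟨u, rfl⟩
      refine ⟨u * x, ?_⟩
      show u * x * b = u * a
      rw [mul_assoc, hx]
    · rintro z ⟨u, rfl⟩
      refine ⟨u * y, ?_⟩
      show u * y * a = u * b
      rw [mul_assoc, hy]

private lemma rRel_iff {a b : S} :
    rRel a b ↔ (∃ x, b * x = a) ∧ (∃ y, a * y = b) := by
  constructor
  · intro h
    have ha : a ∈ Set.range (fun x : S => b * x) := by
      rw [← h]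
      exact ⟨a⁻¹ * a, by show a * (a⁻¹ * a) = a; rw [← mul_assoc]; exact mim a⟩
    have hb : b ∈ Set.range (fun x : S => a * x) := by
      rw [h]
      exact ⟨b⁻¹ * b, by show b * (b⁻¹ * b) = b; rw [← mul_assoc]; exact mim b⟩
    exact ⟨ha, hb⟩
  · rintro ⟨⟨x, hx⟩, ⟨y, hy⟩⟩
    apply Set.eq_of_subset_of_subset
    · rintro z ⟨u, rfl⟩
      refine ⟨x * u, ?_⟩
      show b * (x * u) = a * u
      rw [← mul_assoc, hx]
    · rintro z ⟨u, rfl⟩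
      refine ⟨y * u, ?_⟩
      show a * (y * u) = b * u
      rw [← mul_assoc, hy]

private lemma lRel_of {a b : S} (x y : S) (hx : x * b = a) (hy : y * a = b) :
    lRel a b := lRel_iff.mpr ⟨⟨x, hx⟩, ⟨y, hy⟩⟩

private lemma rRel_of {a b : S} (x y : S) (hx : b * x = a) (hy : a * y = b) :
    rRel a b := rRel_iff.mpr ⟨⟨x, hx⟩, ⟨y, hy⟩⟩

private lemma lRel_symm {a b : S} (h : lRel a b) : lRel b a := by
  unfold lRel at *; exact h.symm

private lemma lRel_trans {a b c : S} (h1 : lRel a b) (h2 : lRel b c) : lRel a c := by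
  unfold lRel at *; exact h1.trans h2

private lemma rRel_symm {a b : S} (h : rRel a b) : rRel b a := by
  unfold rRel at *; exact h.symm

private lemma rRel_trans {a b c : S} (h1 : rRel a b) (h2 : rRel b c) : rRel a c := by
  unfold rRel at *; exact h1.trans h2

private lemma dRel_symm {a b : S} (h : dRel a b) : dRel b a := by
  obtain ⟨c, hl, hr⟩ := h
  obtain ⟨⟨x, hx⟩, ⟨q, hq⟩⟩ := lRel_iff.mp hl   -- x * c = a, q * a = c
  obtain ⟨⟨t, ht⟩, ⟨s, hs⟩⟩ := rRel_iff.mp hr   -- b * t = c, c * s = b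
  refine ⟨a * s, lRel_of q x ?_ ?_, rRel_of s t ?_ ?_⟩
  · rw [← mul_assoc, hq, hs]
  · rw [← hs, ← mul_assoc, hx]
  · rfl
  · rw [← hx, mul_assoc x c s, hs, mul_assoc, ht]

private lemma idem_eq {p q : S} (hp : IsIdempotentElem p) (hq : IsIdempotentElem q)
    (hl : lRel p q) (hr : rRel p q) : p = q := by
  obtain ⟨⟨x, hx⟩, -⟩ := lRel_iff.mp hl     -- x * q = p
  obtain ⟨-, ⟨w, hw⟩⟩ := rRel_iff.mp hr     -- p * w = q
  have h1 : p * q = p := by rw [← hx, mul_assoc, hq.eq]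
  have h2 : p * q = q := by rw [← hw, ← mul_assoc, hp.eq]
  rw [← h1, h2]

private lemma lRel_absorb {a c : S} (h : lRel a c) :
    a * (c * c⁻¹) = a ∧ c * (a * a⁻¹) = c := by
  obtain ⟨⟨x, hx⟩, ⟨y, hy⟩⟩ := lRel_iff.mp h
  constructor
  · rw [← hx, mul_assoc, absr]
  · rw [← hy, mul_assoc, absr]

private lemma rRel_absorb {c b : S} (h : rRel c b) :
    (b * b⁻¹) * c = c ∧ (c * c⁻¹) * b = b := by
  obtain ⟨⟨x, hx⟩, ⟨y, hy⟩⟩ := rRel_iff.mp h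
  constructor
  · rw [← hx, ← mul_assoc, mim]
  · rw [← hy, ← mul_assoc, mim]

private lemma dRel_zero {a b : S} (hd : dRel a b) : dRel (a * a⁻¹) (b * b⁻¹) := by
  obtain ⟨c, hl, hr⟩ := hd
  obtain ⟨h1, h2⟩ := lRel_absorb hl
  obtain ⟨h3, h4⟩ := rRel_absorb hr
  refine ⟨c * c⁻¹, lRel_of (a * a⁻¹) (c * c⁻¹) ?_ ?_, rRel_of (c * c⁻¹) (b * b⁻¹) ?_ ?_⟩
  · rw [comm0 a, mul_assoc, h1]
  · rw [comm0 c, mul_assoc, h2]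
  · rw [← mul_assoc, h3]
  · rw [← mul_assoc, h4]

private lemma key_lemma
    (hrg : ∀ f g : S, IsIdempotentElem f → IsIdempotentElem g → dRel f g →
      IsIdempotentElem (f * g) ∧ f * g * f = f)
    {a b : S} (hd : dRel a b) (hg : IsIdempotentElem (a * b⁻¹)) :
    a * b⁻¹ = (a * a⁻¹) * (b * b⁻¹) := by
  have hdef : dRel (a * a⁻¹) (b * b⁻¹) := dRel_zero hd
  have hdfe : dRel (b * b⁻¹) (a * a⁻¹) := dRel_symm hdef
  obtain ⟨hef_idem, hefe⟩ := hrg (a * a⁻¹) (b * b⁻¹) (idem0 a) (idem0 b) hdef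
  obtain ⟨hfe_idem, hfef⟩ := hrg (b * b⁻¹) (a * a⁻¹) (idem0 b) (idem0 a) hdfe
  obtain ⟨c, hl, hr⟩ := hd
  obtain ⟨hak, hce⟩ := lRel_absorb hl    -- a * (c*c⁻¹) = a, c * (a*a⁻¹) = c
  obtain ⟨hfc, hkb⟩ := rRel_absorb hr    -- (b*b⁻¹)*c = c, (c*c⁻¹)*b = b
  have hek : (a * a⁻¹) * (c * c⁻¹) = a * a⁻¹ := by rw [comm0 a, mul_assoc, hak]
  have hke : (c * c⁻¹) * (a * a⁻¹) = c * c⁻¹ := by rw [comm0 c, mul_assoc, hce]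
  have hfk : (b * b⁻¹) * (c * c⁻¹) = c * c⁻¹ := by rw [← mul_assoc, hfc]
  have hkf : (c * c⁻¹) * (b * b⁻¹) = b * b⁻¹ := by rw [← mul_assoc, hkb]
  have hkbi : (c * c⁻¹) * b⁻¹ = b⁻¹ := by
    rw [← fbi b, ← mul_assoc, hkf]
  -- k = f*e
  have l_fe_e : lRel ((b * b⁻¹) * (a * a⁻¹)) (a * a⁻¹) :=
    lRel_of ((b * b⁻¹) * (a * a⁻¹)) (a * a⁻¹)
      (by rw [mul_assoc, (idem0 a).eq])
      (by rw [← mul_assoc]; exact hefe)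
  have l_k_e : lRel (c * c⁻¹) (a * a⁻¹) :=
    lRel_of (c * c⁻¹) (a * a⁻¹) hke hek
  have r_fe_f : rRel ((b * b⁻¹) * (a * a⁻¹)) (b * b⁻¹) :=
    rRel_of (a * a⁻¹) (b * b⁻¹) rfl hfef
  have r_k_f : rRel (c * c⁻¹) (b * b⁻¹) :=
    rRel_of (c * c⁻¹) (b * b⁻¹) hfk hkf
  have hkfe : (b * b⁻¹) * (a * a⁻¹) = c * c⁻¹ :=
    idem_eq hfe_idem (idem0 c) (lRel_trans l_fe_e (lRel_symm l_k_e))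
      (rRel_trans r_fe_f (rRel_symm r_k_f))
  -- v := b⁻¹ * a is idempotent
  have h5 : (a * a⁻¹) * ((b⁻¹ * a) * (b⁻¹ * a)) = (a * a⁻¹) * (b⁻¹ * a) := by
    have h := congrArg (fun x => a⁻¹ * (x * a)) hg.eq
    simp only [mul_assoc] at h
    rw [comm0 a]
    simp only [mul_assoc]
    exact h
  have hkv : (c * c⁻¹) * (b⁻¹ * a) = b⁻¹ * a := by
    rw [← mul_assoc, hkbi]
  have hvk : (b⁻¹ * a) * (c * c⁻¹) = b⁻¹ * a := by
    rw [mul_assoc, hak]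
  have hv : IsIdempotentElem (b⁻¹ * a) := by
    show (b⁻¹ * a) * (b⁻¹ * a) = b⁻¹ * a
    calc (b⁻¹ * a) * (b⁻¹ * a)
        = (c * c⁻¹) * ((b⁻¹ * a) * (b⁻¹ * a)) := by
          conv_rhs => rw [← mul_assoc (c * c⁻¹) (b⁻¹ * a) (b⁻¹ * a), hkv]
      _ = ((c * c⁻¹) * (a * a⁻¹)) * ((b⁻¹ * a) * (b⁻¹ * a)) := by rw [hke]
      _ = (c * c⁻¹) * ((a * a⁻¹) * ((b⁻¹ * a) * (b⁻¹ * a))) := by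
          rw [mul_assoc (c * c⁻¹) (a * a⁻¹)]
      _ = (c * c⁻¹) * ((a * a⁻¹) * (b⁻¹ * a)) := by rw [h5]
      _ = ((c * c⁻¹) * (a * a⁻¹)) * (b⁻¹ * a) := by
          rw [← mul_assoc (c * c⁻¹) (a * a⁻¹) (b⁻¹ * a)]
      _ = (c * c⁻¹) * (b⁻¹ * a) := by rw [hke]
      _ = b⁻¹ * a := hkv
  -- dRel k v
  have hdkv : dRel (c * c⁻¹) (b⁻¹ * a) := by
    refine ⟨b⁻¹ * (a * a⁻¹), lRel_of b (b⁻¹ * (a * a⁻¹)) ?_ ?_, rRel_of a⁻¹ a ?_ ?_⟩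
    · rw [← mul_assoc]; exact hkfe
    · rw [mul_assoc, hek]
    · rw [mul_assoc]
    · rw [mul_assoc, mim]
  obtain ⟨-, hkvk⟩ := hrg (c * c⁻¹) (b⁻¹ * a) (idem0 c) hv hdkv
  have hveqk : b⁻¹ * a = c * c⁻¹ := by
    rw [← hkvk, hkv, hvk]
  -- consequences
  have hga : (a * b⁻¹) * a = a := by rw [mul_assoc, hveqk, hak]
  have hafe : a * ((b * b⁻¹) * (a * a⁻¹)) = a := by rw [hkfe, hak]
  have heg : (a * a⁻¹) * (a * b⁻¹) = a * b⁻¹ := by rw [← mul_assoc, mim]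
  have hgf : (a * b⁻¹) * (b * b⁻¹) = a * b⁻¹ := by rw [mul_assoc, bif']
  -- dRel e g, hence g*e = e
  have hdeg : dRel (a * a⁻¹) (a * b⁻¹) :=
    ⟨a, lRel_of a⁻¹ a (comm0 a).symm (absr a), rRel_of a b⁻¹ hga rfl⟩
  obtain ⟨-, hege⟩ := hrg (a * a⁻¹) (a * b⁻¹) (idem0 a) hg hdeg
  have hge : (a * b⁻¹) * (a * a⁻¹) = a * a⁻¹ := by
    conv_rhs => rw [← hege]
    rw [heg]
  -- dRel f g, hence f*g = f
  have hlfaf : lRel (b * b⁻¹) (a * (b * b⁻¹)) :=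
    lRel_of ((b * b⁻¹) * a⁻¹) a
      (by rw [mul_assoc, ← mul_assoc a⁻¹ a, ← comm0, ← mul_assoc]; exact hfef)
      rfl
  have hraf : rRel (a * (b * b⁻¹)) (a * b⁻¹) :=
    rRel_of (a * (b * b⁻¹)) ((a * a⁻¹) * b⁻¹)
      (by rw [← mul_assoc, hga])
      (by rw [mul_assoc, ← mul_assoc (b * b⁻¹), ← mul_assoc a, hafe])
  have hdfg : dRel (b * b⁻¹) (a * b⁻¹) := ⟨a * (b * b⁻¹), hlfaf, hraf⟩
  obtain ⟨-, hfgf⟩ := hrg (b * b⁻¹) (a * b⁻¹) (idem0 b) hg hdfg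
  have hfg : (b * b⁻¹) * (a * b⁻¹) = b * b⁻¹ := by
    conv_rhs => rw [← hfgf, mul_assoc (b * b⁻¹) (a * b⁻¹) (b * b⁻¹), hgf]
  -- conclude g = e*f
  have hlgf : lRel (a * b⁻¹) (b * b⁻¹) := lRel_of (a * b⁻¹) (b * b⁻¹) hgf hfg
  have hlef_f : lRel ((a * a⁻¹) * (b * b⁻¹)) (b * b⁻¹) :=
    lRel_of ((a * a⁻¹) * (b * b⁻¹)) (b * b⁻¹)
      (by rw [mul_assoc, (idem0 b).eq])
      (by rw [← mul_assoc]; exact hfef)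
  have hrge : rRel (a * b⁻¹) (a * a⁻¹) := rRel_of (a * b⁻¹) (a * a⁻¹) heg hge
  have href_e : rRel ((a * a⁻¹) * (b * b⁻¹)) (a * a⁻¹) :=
    rRel_of (b * b⁻¹) (a * a⁻¹) rfl hefe
  exact idem_eq hg hef_idem
    (lRel_trans hlgf (lRel_symm hlef_f))
    (rRel_trans hrge (rRel_symm href_e))

/-- If `S` is a semilattice of rectangular groups (every `D`-class is a rectangular
group, i.e. `D`-related idempotents generate a rectangular band), then
`D ∩ F = D ∩ Θ`. -/
theorem dRel_inter_fRel_eq_dRel_inter_thetaRel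
    (hrg : ∀ f g : S, IsIdempotentElem f → IsIdempotentElem g → dRel f g →
      IsIdempotentElem (f * g) ∧ f * g * f = f) :
    ∀ a b : S, (dRel a b ∧ fRel a b) ↔ (dRel a b ∧ thetaRel a b) := by
  intro a b
  constructor
  · rintro ⟨hd, hf⟩
    refine ⟨hd, ?_⟩
    have hf' : IsIdempotentElem (a * b⁻¹) := hf
    have hkey := key_lemma hrg hd hf'
    show (a * a⁻¹) * b = a * (b * b⁻¹)
    calc (a * a⁻¹) * b = (a * a⁻¹) * ((b * b⁻¹) * b) := by rw [mim]
      _ = ((a * a⁻¹) * (b * b⁻¹)) * b := by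
          rw [← mul_assoc (a * a⁻¹) (b * b⁻¹) b]
      _ = (a * b⁻¹) * b := by rw [← hkey]
      _ = a * (b⁻¹ * b) := by rw [mul_assoc]
      _ = a * (b * b⁻¹) := by rw [comm0]
  · rintro ⟨hd, ht⟩
    refine ⟨hd, ?_⟩
    have ht' : (a * a⁻¹) * b = a * (b * b⁻¹) := ht
    have hef := (hrg (a * a⁻¹) (b * b⁻¹) (idem0 a) (idem0 b) (dRel_zero hd)).1
    have key : a * b⁻¹ = (a * a⁻¹) * (b * b⁻¹) := by
      calc a * b⁻¹ = a * ((b * b⁻¹) * b⁻¹) := by rw [fbi]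
        _ = (a * (b * b⁻¹)) * b⁻¹ := by rw [← mul_assoc a (b * b⁻¹) b⁻¹]
        _ = ((a * a⁻¹) * b) * b⁻¹ := by rw [ht']
        _ = (a * a⁻¹) * (b * b⁻¹) := by rw [mul_assoc (a * a⁻¹) b b⁻¹]
    show IsIdempotentElem (a * b⁻¹)
    rw [key]
    exact hef
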